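/- Let $V : \mathbb{R}^n \times 2^{[n]} \to \mathbb{R}$ be a set-valuation parametrized by item-wise private information, satisfying: (monotonicity) $V(\vec{x}, S) \leq V(\vec{x}, S \cup T)$ for all $\vec{x}, S, T$; (subadditivity) $V(\vec{x}, S\cup T) \leq V(\vec{x},S) + V(\vec{x},T)$; (no externalities) $V(\vec{x},S)$ depends only on $(x_i)_{i \in S}$; and (bounded singletons) $V(\vec{x}, \{i\}) \in [0,c]$ for all $\vec{x}, i$. Then $V$ is $c$-Lipschitz: for all $\vec{x},\vec{y}$ and sets $S, T$, $|V(\vec{x},S) - V(\vec{y},T)| \leq c\cdot(|S \cup T| - |S \cap T| + |\{i \in S \cap T : x_i \neq y_i\}|)$. -/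

import Mathlib

/-!
Let `U` be the set of common items on which `x` and `y` agree, so that `V x U = V y U`.
By monotonicity `V x S ≥ V x U`, and by subadditivity each of the `|S \ U|` remaining items
adds at most `c`, so `V x S ∈ [V x U, V x U + c |S \ U|]`; likewise for `V y T`. Both
`|S \ U|` and `|T \ U|` are at most `|S ∪ T| - |U|`, which is the displayed distance.
-/

open Finset

section Valuation

variable {α : Type*} [DecidableEq α] {f : Finset α → ℝ} {c : ℝ}

theorem le_add_mul_card_of_subadditive (hsub : ∀ S T, f (S ∪ T) ≤ f S + f T)
    (hc : ∀ i, f {i} ≤ c) (U W : Finset α) : f (U ∪ W) ≤ f U + c * #W := by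
  induction W using Finset.induction_on with
  | empty => simp
  | insert a W ha ih =>
    calc f (U ∪ insert a W) = f ({a} ∪ (U ∪ W)) := by rw [union_insert, insert_eq]
      _ ≤ f {a} + f (U ∪ W) := hsub _ _
      _ ≤ c + (f U + c * #W) := add_le_add (hc a) ih
      _ = f U + c * #(insert a W) := by rw [card_insert_of_notMem ha]; push_cast; ring

theorem mem_Icc_add_mul_card_sub (hmono : ∀ S T, f S ≤ f (S ∪ T))
    (hsub : ∀ S T, f (S ∪ T) ≤ f S + f T) (hc : ∀ i, f {i} ≤ c) (hc₀ : 0 ≤ c)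
    {U S W : Finset α} (hUS : U ⊆ S) (hSW : S ⊆ W) :
    f S ∈ Set.Icc (f U) (f U + c * (#W - #U)) := by
  have hS : U ∪ (S \ U) = S := union_sdiff_of_subset hUS
  have hcard : (#(S \ U) : ℝ) ≤ #W - #U := by
    rw [card_sdiff_of_subset hUS, Nat.cast_sub (card_le_card hUS)]
    gcongr
  constructor
  · simpa only [hS] using hmono U (S \ U)
  · calc f S = f (U ∪ (S \ U)) := by rw [hS]
      _ ≤ f U + c * #(S \ U) := le_add_mul_card_of_subadditive hsub hc U (S \ U)
      _ ≤ f U + c * (#W - #U) := by gcongr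

end Valuation

/-- A monotone, subadditive valuation with no externalities and singleton values
in `[0,c]` is `c`-Lipschitz. -/
theorem stmt_4 (n : ℕ) (c : ℝ) (V : (Fin n → ℝ) → Finset (Fin n) → ℝ)
    (hmono : ∀ x S T, V x S ≤ V x (S ∪ T))
    (hsub : ∀ x S T, V x (S ∪ T) ≤ V x S + V x T)
    (hext : ∀ x y S, (∀ i ∈ S, x i = y i) → V x S = V y S)
    (hbound : ∀ x i, 0 ≤ V x {i} ∧ V x {i} ≤ c) :
    ∀ (x y : Fin n → ℝ) (S T : Finset (Fin n)),
      |V x S - V y T| ≤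
        c * (((S ∪ T).card : ℝ) - (S ∩ T).card +
          ((S ∩ T).filter (fun i => x i ≠ y i)).card) := by
  intro x y S T
  rcases (S ∪ T).eq_empty_or_nonempty with hST | ⟨i, -⟩
  · obtain ⟨rfl, rfl⟩ := union_eq_empty.mp hST
    simp [hext x y ∅ (by simp)]
  have hc₀ : 0 ≤ c := (hbound x i).1.trans (hbound x i).2
  set U := (S ∩ T).filter (fun i => x i = y i)
  have hVU : V x U = V y U := hext x y U fun i hi => (mem_filter.mp hi).2
  have hU : (#U : ℝ) = #(S ∩ T) - #((S ∩ T).filter (fun i => x i ≠ y i)) := by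
    rw [eq_sub_iff_add_eq]
    exact_mod_cast card_filter_add_card_filter_not _
  have hUS : U ⊆ S := (filter_subset _ _).trans inter_subset_left
  have hUT : U ⊆ T := (filter_subset _ _).trans inter_subset_right
  have hS := mem_Icc_add_mul_card_sub (hmono x) (hsub x) (fun i => (hbound x i).2) hc₀
    hUS (subset_union_left (s₂ := T))
  have hT := mem_Icc_add_mul_card_sub (hmono y) (hsub y) (fun i => (hbound y i).2) hc₀
    hUT (subset_union_right (s₁ := S))
  rw [hVU] at hS
  rw [← Real.dist_eq, sub_add, ← hU]
  simpa only [add_sub_cancel_left] using Real.dist_le_of_mem_Icc hS hT
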